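/- Let M be a homotopical category, M_D a full subcategory, D : M → M a functor whose image lies in M_D, connected to the identity by a finite zigzag of natural weak equivalences D ∼ D_k ∼ ⋯ ∼ D_1 ∼ 𝟭_M, such that each intermediate functor D_i maps M_D into M_D. Then the inclusion I : M_D ↪ M induces an equivalence of categories Ho(M_D) ≃ Ho(M). -/

import Mathlib

/-!
In `Ho(M)` the zigzag gives `D ≅ 𝟭`, and since every intermediate functor restricts to `M_D`,
the same zigzag, read inside `M_D`, gives `D|_{M_D} ≅ 𝟭` in `Ho(M_D)`. So the inclusion
`M_D ↪ M` and `D : M → M_D` are mutually inverse after localization; `D` preserves weak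
equivalences because the identity does and, by 2-out-of-3 (a consequence of 2-out-of-6),
this property is invariant along natural weak equivalences.
-/

namespace CategoryTheory

namespace MorphismProperty

variable {C : Type*} [Category C] (W : MorphismProperty C)

lemma hasTwoOutOfThreeProperty_of_twoOutOfSix [W.ContainsIdentities]
    (h26 : ∀ {X Y Z T : C} (f : X ⟶ Y) (g : Y ⟶ Z) (h : Z ⟶ T),
      W (f ≫ g) → W (g ≫ h) → W f ∧ W g ∧ W h ∧ W (f ≫ g ≫ h)) :
    W.HasTwoOutOfThreeProperty where
  comp_mem f g hf hg := by
    simpa using (h26 f (𝟙 _) g (by simpa using hf) (by simpa using hg)).2.2.2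
  of_postcomp f g hg hfg := (h26 f g (𝟙 _) hfg (by simpa using hg)).1
  of_precomp f g hf hfg := (h26 (𝟙 _) f g (by simpa using hf) hfg).2.2.1

def Zigzag : C → C → Prop :=
  Relation.EqvGen fun X Y => ∃ f : X ⟶ Y, W f

variable {W}

lemma Zigzag.of_fin {n : ℕ} (X : Fin (n + 1) → C)
    (h : ∀ i : Fin n,
      (∃ f : X i.castSucc ⟶ X i.succ, W f) ∨ (∃ f : X i.succ ⟶ X i.castSucc, W f)) :
    W.Zigzag (X 0) (X (Fin.last n)) := by
  suffices ∀ i, W.Zigzag (X 0) (X i) from this _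
  intro i
  induction i using Fin.induction with
  | zero => exact .refl _
  | succ i ih =>
    refine .trans _ _ _ ih ?_
    rcases h i with hi | hi
    · exact .rel _ _ hi
    · exact .symm _ _ (.rel _ _ hi)

lemma Zigzag.isIsomorphic_map {D : Type*} [Category D] {X Y : C} (h : W.Zigzag X Y)
    (L : C ⥤ D) (hL : W.IsInvertedBy L) : IsIsomorphic (L.obj X) (L.obj Y) :=
  ((isIsomorphicSetoid D).comap L.obj).iseqv.eqvGen_iff.1 <|
    Relation.EqvGen.mono (fun _ _ ⟨f, hf⟩ => ⟨haveI := hL f hf; asIso (L.map f)⟩) _ _ h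

lemma Zigzag.le_inverseImage_iff [W.HasTwoOutOfThreeProperty] {J : Type*} [Category J]
    {F G : J ⥤ C} (h : (W.functorCategory J).Zigzag F G) (W₀ : MorphismProperty J) :
    W₀ ≤ W.inverseImage F ↔ W₀ ≤ W.inverseImage G := by
  refine Eq.to_iff <| (Setoid.ker fun F => W₀ ≤ W.inverseImage F).iseqv.eqvGen_iff.1 <|
    Relation.EqvGen.mono (fun F G ⟨α, hα⟩ => propext ?_) _ _ h
  constructor
  · intro hF X Y f hf
    refine W.of_precomp _ _ (hα X) ?_
    rw [← α.naturality]
    exact W.comp_mem _ _ (hF f hf) (hα Y)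
  · intro hG X Y f hf
    refine W.of_postcomp _ _ (hα Y) ?_
    rw [α.naturality]
    exact W.comp_mem _ _ (hα X) (hG f hf)

lemma isInvertedBy_functorCategory_whiskeringRight {D : Type*} [Category D] (J : Type*)
    [Category J] (L : C ⥤ D) (hL : W.IsInvertedBy L) :
    (W.functorCategory J).IsInvertedBy ((Functor.whiskeringRight J C D).obj L) :=
  fun _ _ α hα =>
    haveI : ∀ X, IsIso ((((Functor.whiskeringRight J C D).obj L).map α).app X) :=
      fun X => hL _ (hα X)
    NatIso.isIso_of_isIso_app _

lemma exists_lift_functorCategory_inverseImage_ι {J : Type*} [Category J] (P : ObjectProperty C)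
    {F G : J ⥤ C} (hF : ∀ X, P (F.obj X)) (hG : ∀ X, P (G.obj X)) (α : F ⟶ G)
    (hα : W.functorCategory J α) :
    ∃ α' : P.lift F hF ⟶ P.lift G hG, (W.inverseImage P.ι).functorCategory J α' :=
  ⟨{ app X := P.homMk (α.app X)
     naturality _ _ f := by ext; exact α.naturality f }, hα⟩

end MorphismProperty

namespace Localization.Construction

variable {C C' : Type*} [Category C] [Category C'] {W : MorphismProperty C}
  {W' : MorphismProperty C'}

lemma isEquivalence_lift_of_isos {F : C ⥤ C'} {G : C' ⥤ C}
    (hF : W.IsInvertedBy (F ⋙ W'.Q)) (hG : W'.IsInvertedBy (G ⋙ W.Q))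
    (e : (F ⋙ G) ⋙ W.Q ≅ W.Q) (e' : (G ⋙ F) ⋙ W'.Q ≅ W'.Q) :
    (lift (F ⋙ W'.Q) hF).IsEquivalence := by
  let F' := lift (F ⋙ W'.Q) hF
  let G' := lift (G ⋙ W.Q) hG
  letI : Localization.Lifting W.Q W ((F ⋙ G) ⋙ W.Q) (F' ⋙ G') :=
    ⟨eqToIso (by rw [← Functor.assoc, fac, Functor.assoc, fac, Functor.assoc])⟩
  letI : Localization.Lifting W'.Q W' ((G ⋙ F) ⋙ W'.Q) (G' ⋙ F') :=
    ⟨eqToIso (by rw [← Functor.assoc, fac, Functor.assoc, fac, Functor.assoc])⟩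
  exact (Equivalence.mk F' G' (liftNatIso W.Q W _ _ _ _ e).symm
    (liftNatIso W'.Q W' _ _ _ _ e')).isEquivalence_functor

end Localization.Construction

end CategoryTheory

open CategoryTheory MorphismProperty

/-- If `D` is a middle deformation of the homotopical category `M` into a full
subcategory `M_D` (i.e. `D` is connected to the identity by a finite zigzag of natural weak
equivalences, each intermediate functor mapping `M_D` into itself), then the inclusion
`M_D ↪ M` induces an equivalence `Ho(M_D) ≃ Ho(M)`. -/
theorem statement2 {M : Type u} [Category.{v} M] (W : MorphismProperty M)
    (hid : ∀ X : M, W (𝟙 X))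
    (h26 : ∀ {X Y Z T : M} (f : X ⟶ Y) (g : Y ⟶ Z) (h : Z ⟶ T),
      W (f ≫ g) → W (g ≫ h) → W f ∧ W g ∧ W h ∧ W (f ≫ g ≫ h))
    (P : M → Prop) (D : M ⥤ M) (hD : ∀ X : M, P (D.obj X))
    -- the zigzag `D = Ds 0 ∼ Ds 1 ∼ ⋯ ∼ Ds n = 𝟭 M`:
    (n : ℕ) (Ds : Fin (n + 1) → (M ⥤ M))
    (hfirst : Ds 0 = D) (hlast : Ds (Fin.last n) = 𝟭 M)
    (hzigzag : ∀ i : Fin n,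
      (∃ α : Ds i.castSucc ⟶ Ds i.succ, ∀ X : M, W (α.app X)) ∨
      (∃ α : Ds i.succ ⟶ Ds i.castSucc, ∀ X : M, W (α.app X)))
    -- each intermediate functor maps `M_D` into itself:
    (hinter : ∀ (i : Fin (n + 1)) (X : M), i ≠ Fin.last n → P X → P ((Ds i).obj X)) :
    (Localization.Construction.lift
      (W := W.inverseImage (ObjectProperty.ι P))
      (ObjectProperty.ι P ⋙ W.Q)
      (fun _ _ f hf => Localization.inverts W.Q W _ hf)).IsEquivalence := by
  subst hfirst
  have : W.ContainsIdentities := ⟨hid⟩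
  have := W.hasTwoOutOfThreeProperty_of_twoOutOfSix h26
  have hP : ∀ i X, P X → P ((Ds i).obj X) := fun i X hX => by
    rcases eq_or_ne i (Fin.last n) with rfl | hi
    · rwa [hlast]
    · exact hinter i X hi hX
  let ι := ObjectProperty.ι P
  let W' := W.inverseImage ι
  let Ds' i := ObjectProperty.lift P (ι ⋙ Ds i) fun X => hP i _ X.2
  have restrict {i j} : (∃ α : Ds i ⟶ Ds j, W.functorCategory M α) →
      ∃ α' : Ds' i ⟶ Ds' j, W'.functorCategory _ α' := fun ⟨α, hα⟩ =>
    exists_lift_functorCategory_inverseImage_ι _ _ _ (Functor.whiskerLeft ι α) fun X => hα X.obj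
  have hzig : (W.functorCategory M).Zigzag (Ds 0) (Ds (Fin.last n)) := .of_fin Ds hzigzag
  have hzig' : (W'.functorCategory _).Zigzag (Ds' 0) (Ds' (Fin.last n)) :=
    .of_fin Ds' fun i => (hzigzag i).imp restrict restrict
  have hD' : W ≤ W.inverseImage (Ds 0) :=
    (hzig.le_inverseImage_iff W).2 (by rw [hlast]; exact fun _ _ _ => id)
  obtain ⟨e⟩ := hzig.isIsomorphic_map _
    (isInvertedBy_functorCategory_whiskeringRight M W.Q (Localization.inverts _ _))
  obtain ⟨e'⟩ := hzig'.isIsomorphic_map _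
    (isInvertedBy_functorCategory_whiskeringRight _ W'.Q (Localization.inverts _ _))
  have eLast : Ds' (Fin.last n) ≅ 𝟭 _ :=
    ((ObjectProperty.fullyFaithfulι P).whiskeringRight _).preimageIso
      (Functor.isoWhiskerLeft ι (eqToIso hlast) ≪≫ ι.rightUnitor ≪≫ ι.leftUnitor.symm)
  exact Localization.Construction.isEquivalence_lift_of_isos
    (G := ObjectProperty.lift P (Ds 0) hD) _
    (fun _ _ _ hf => Localization.inverts W'.Q W' _ (hD' _ hf))
    (e' ≪≫ Functor.isoWhiskerRight eLast _ ≪≫ Functor.leftUnitor _)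
    (e ≪≫ Functor.isoWhiskerRight (eqToIso hlast) _ ≪≫ Functor.leftUnitor _)
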